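/- Let $f(z,u)$ be a power series with $f=z^{rk}+g(z,u)$, and let $w$ be the weight $w(z)=\frac{1}{r}$, $w(u)=1$ with $m=w(f)$. If $f'=f(zu^{1/r},u)/u^m$ factors as $f'=f_1'f_2'$ into non-unit $\mathbb{Z}/r\mathbb{Z}$-invariant power series, then, setting $m_1=-\min\{j-i: \xi_{i,j}\neq 0\}$ and $m_2=-\min\{j-i: \zeta_{i,j}\neq 0\}$ for $f_1'=\sum\xi_{i,j}z^{ri}u^j$ and $f_2'=\sum\zeta_{i,j}z^{ri}u^j$, one has $m_1+m_2\leq m$, and $f=u^{m-m_1-m_2}f_1f_2$ where $f_l=\sum z^{ri}u^{j-i+m_l}$ (coefficients from $f_l'$); in particular $f$ is reducible as a $\mathbb{Z}/r\mathbb{Z}$-invariant function. -/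

import Mathlib

/-!
Let `shear` be the substitution `g(Z, u) ↦ g(Z u, u)` (with `Z = X 0`, `u = X 1`): an
injective algebra endomorphism of `ℂ⟦Z, u⟧` fixing `u`. The coefficient formulas defining
`f'`, `f₁`, `f₂` say exactly that `shear f = uᵐ f'`, `shear f₁ = u^m₁ f₁'` and
`shear f₂ = u^m₂ f₂'` (here `m₁, m₂ ≥ 0` because `u ∤ f'`), so `shear (f₁ f₂) = u^(m₁ + m₂) f'`.
If `m < m₁ + m₂`, injectivity gives `f₁ f₂ = u^(m₁ + m₂ - m) f`, impossible since `u` is prime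
and the minimality of `m₁, m₂` means `u ∤ f₁, f₂`. Otherwise it gives
`f = u^(m - m₁ - m₂) f₁ f₂`, a product of two series without constant term.
-/

namespace Finsupp

variable {M : Type*}

lemma single_zero_add_single_one [AddZeroClass M] (d : Fin 2 →₀ M) :
    single 0 (d 0) + single 1 (d 1) = d := by
  ext i
  fin_cases i <;> simp

lemma ext_fin_two [Zero M] {d e : Fin 2 →₀ M} (h0 : d 0 = e 0) (h1 : d 1 = e 1) : d = e := by
  ext i
  fin_cases i <;> assumption

end Finsupp

namespace MvPowerSeries

open Finsupp

section

variable {σ R : Type*} [CommSemiring R]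

lemma X_dvd_iff_weightedOrder_ne_zero [DecidableEq σ] [NoZeroDivisors R] [Nontrivial R]
    {s : σ} {φ : MvPowerSeries σ R} :
    X s ∣ φ ↔ φ.weightedOrder (Pi.single s 1) ≠ 0 := by
  constructor
  · rintro ⟨ψ, rfl⟩
    rw [weightedOrder_mul, X, weightedOrder_monomial_of_ne_zero _ one_ne_zero,
      weight_single_one_apply, single_eq_same]
    simp
  · intro h
    refine X_dvd_iff.mpr fun m hm => coeff_eq_zero_of_lt_weightedOrder (Pi.single s 1) ?_
    rw [weight_single_one_apply, hm]
    exact pos_iff_ne_zero.mpr h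

theorem X_prime [NoZeroDivisors R] [Nontrivial R] (s : σ) : Prime (X s : MvPowerSeries σ R) := by
  classical
  refine ⟨fun h => ?_, fun h => ?_, fun a b hab => ?_⟩
  · simpa using congrArg (coeff (single s 1)) h
  · simpa using h.map constantCoeff
  · simp only [X_dvd_iff_weightedOrder_ne_zero, weightedOrder_mul] at hab ⊢
    contrapose! hab
    simp [hab.1, hab.2]

lemma not_X_dvd_of_coeff_ne_zero {s : σ} {φ : MvPowerSeries σ R} {d : σ →₀ ℕ}
    (hd : coeff d φ ≠ 0) (hs : d s = 0) : ¬ X s ∣ φ :=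
  fun h => hd (X_dvd_iff.mp h d hs)

lemma not_irreducible_of_eq_mul {f a b : MvPowerSeries σ R} [Nontrivial R]
    (h : f = a * b) (ha : constantCoeff a = 0) (hb : constantCoeff b = 0) : ¬ Irreducible f := by
  intro hf
  rcases hf.isUnit_or_isUnit h with hu | hu
  · simpa [ha] using hu.map constantCoeff
  · simpa [hb] using hu.map constantCoeff

end

variable {R : Type*} [CommRing R]

lemma hasSubst_shear : HasSubst ![(X 0 * X 1 : MvPowerSeries (Fin 2) R), X 1] :=
  hasSubst_of_constantCoeff_zero fun s => by fin_cases s <;> simp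

noncomputable def shear : MvPowerSeries (Fin 2) R →ₐ[R] MvPowerSeries (Fin 2) R :=
  substAlgHom hasSubst_shear

lemma shear_X_one : shear (X 1 : MvPowerSeries (Fin 2) R) = X 1 := by
  rw [shear, substAlgHom_X]; rfl

lemma coeff_shear (g : MvPowerSeries (Fin 2) R) (d : Fin 2 →₀ ℕ) :
    coeff d (shear g) =
      if d 0 ≤ d 1 then coeff (single 0 (d 0) + single 1 (d 1 - d 0)) g else 0 := by
  classical
  have hmonomial (e : Fin 2 →₀ ℕ) :
      (e.prod fun s n => (![(X 0 * X 1 : MvPowerSeries (Fin 2) R), X 1] s) ^ n) =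
        monomial (single 0 (e 0) + single 1 (e 0 + e 1)) 1 := by
    rw [Finsupp.prod_fintype _ _ (fun _ => pow_zero _), Fin.prod_univ_two]
    simp only [Matrix.cons_val_zero, Matrix.cons_val_one, mul_pow, X_pow_eq,
      monomial_mul_monomial, mul_one, single_add, add_assoc]
  simp only [shear, substAlgHom_apply, coeff_subst hasSubst_shear, hmonomial, coeff_monomial]
  split_ifs with hd
  · rw [finsum_eq_single _ (single 0 (d 0) + single 1 (d 1 - d 0))]
    · rw [if_pos, smul_eq_mul, mul_one]
      exact ext_fin_two (by simp) (by simp; omega)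
    · intro e he
      rw [if_neg, smul_zero]
      rintro rfl
      exact he (ext_fin_two (by simp) (by simp))
  · refine finsum_eq_zero_of_forall_eq_zero fun e => ?_
    rw [if_neg, smul_zero]
    rintro rfl
    simp at hd

lemma coeff_shear_single_add (g : MvPowerSeries (Fin 2) R) (i j : ℕ) :
    coeff (single 0 i + single 1 (i + j)) (shear g) = coeff (single 0 i + single 1 j) g := by
  simp [coeff_shear]

lemma shear_injective : Function.Injective (shear : MvPowerSeries (Fin 2) R → _) := by
  intro g h hgh
  ext d
  have := congrArg (coeff (single 0 (d 0) + single 1 (d 0 + d 1))) hgh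
  rwa [coeff_shear_single_add, coeff_shear_single_add, single_zero_add_single_one] at this

lemma constantCoeff_shear (g : MvPowerSeries (Fin 2) R) :
    constantCoeff (shear g) = constantCoeff g := by
  simpa using coeff_shear g 0

lemma coeff_X_one_pow_mul (g : MvPowerSeries (Fin 2) R) (k : ℕ) (d : Fin 2 →₀ ℕ) :
    coeff d (X 1 ^ k * g) =
      if k ≤ d 1 then coeff (single 0 (d 0) + single 1 (d 1 - k)) g else 0 := by
  simp only [X_pow_eq, coeff_monomial_mul, single_le_iff, one_mul]
  split_ifs
  · congr 2
    exact ext_fin_two (by simp) (by simp)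
  · rfl

lemma shear_eq_X_one_pow_mul_of_le_degree {g h : MvPowerSeries (Fin 2) R} {k : ℕ}
    (hh : ∀ d : Fin 2 →₀ ℕ, coeff d h ≠ 0 → k ≤ d 0 + d 1)
    (hg : ∀ d : Fin 2 →₀ ℕ, coeff d g =
      if (d 0 : ℤ) ≤ (d 1 : ℤ) + (k : ℤ) then
        coeff (single 0 (d 0) + single 1 (d 1 + k - d 0)) h
      else 0) :
    shear h = X 1 ^ k * g := by
  ext d
  rw [coeff_X_one_pow_mul, coeff_shear]
  split_ifs with hd hk hk
  · rw [hg, if_pos (by simp; omega)]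
    congr 2
    exact ext_fin_two (by simp) (by simp; omega)
  · by_contra hne
    have := hh _ hne
    simp at this
    omega
  · rw [hg, if_neg (by simp; omega)]
  · rfl

lemma shear_eq_X_one_pow_mul_of_sub_le {g h : MvPowerSeries (Fin 2) R} {k : ℤ} (hk : 0 ≤ k)
    (hg : ∀ d : Fin 2 →₀ ℕ, coeff d g ≠ 0 → 0 ≤ (d 1 : ℤ) - (d 0 : ℤ) + k)
    (hh : ∀ d : Fin 2 →₀ ℕ, coeff d h =
      if 0 ≤ (d 1 : ℤ) + (d 0 : ℤ) - k then
        coeff (single 0 (d 0) + single 1 ((d 1 : ℤ) + (d 0 : ℤ) - k).toNat) g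
      else 0) :
    shear h = X 1 ^ k.toNat * g := by
  ext d
  rw [coeff_X_one_pow_mul, coeff_shear]
  split_ifs with hd hk' hk'
  · rw [hh, if_pos (by simp; omega)]
    congr 2
    exact ext_fin_two (by simp) (by simp; omega)
  · rw [hh, if_neg (by simp; omega)]
  · by_contra hne
    have := hg _ (Ne.symm hne)
    simp at this
    omega
  · rfl

lemma le_of_shear_eq_X_one_pow_mul {a c g : MvPowerSeries (Fin 2) R} {N M : ℕ}
    (ha : ¬ X 1 ∣ a) (hag : shear a = X 1 ^ N * g) (hcg : shear c = X 1 ^ M * g) : N ≤ M := by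
  by_contra! hlt
  obtain ⟨n, rfl⟩ : ∃ n, N = n + 1 + M := ⟨N - M - 1, by omega⟩
  have hac : a = X 1 ^ (n + 1) * c := shear_injective (by
    rw [hag, map_mul, map_pow, shear_X_one, hcg, pow_add, pow_add, mul_assoc])
  exact ha (hac ▸ dvd_mul_of_dvd_left (dvd_pow_self _ n.succ_ne_zero) _)

lemma nonneg_of_not_X_one_dvd {g : MvPowerSeries (Fin 2) R} {k : ℤ}
    (hg : ∀ d : Fin 2 →₀ ℕ, coeff d g ≠ 0 → 0 ≤ (d 1 : ℤ) - (d 0 : ℤ) + k)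
    (hX : ¬ X 1 ∣ g) : 0 ≤ k := by
  obtain ⟨d, hd1, hd⟩ : ∃ d : Fin 2 →₀ ℕ, d 1 = 0 ∧ coeff d g ≠ 0 := by
    simpa [X_dvd_iff] using hX
  have := hg d hd
  omega

lemma not_X_one_dvd_of_coeff {g h : MvPowerSeries (Fin 2) R} {k : ℤ}
    (hex : ∃ d : Fin 2 →₀ ℕ, coeff d g ≠ 0 ∧ (d 1 : ℤ) - (d 0 : ℤ) + k = 0)
    (hh : ∀ d : Fin 2 →₀ ℕ, coeff d h =
      if 0 ≤ (d 1 : ℤ) + (d 0 : ℤ) - k then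
        coeff (single 0 (d 0) + single 1 ((d 1 : ℤ) + (d 0 : ℤ) - k).toNat) g
      else 0) :
    ¬ X 1 ∣ h := by
  obtain ⟨d, hd, hdk⟩ := hex
  refine not_X_dvd_of_coeff_ne_zero (d := single 0 (d 0)) ?_ (by simp)
  rw [hh, if_pos (by simp; omega)]
  convert hd
  exact ext_fin_two (by simp) (by simp; omega)

end MvPowerSeries

open MvPowerSeries

/-- working with invariant power series in `Z = z^r` and `u`
(variable `0` is `Z`, variable `1` is `u`), let `m` be the weight of `f`
(minimum of `i + j` over monomials `Z^i u^j` of `f`), and let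
`f'(Z,u) = f(Zu,u)/u^m`, i.e. `coeff f' (i,j') = coeff f (i, j'+m-i)`.
If `f' = f₁' f₂'` with both factors non-units, and `m₁, m₂` are the negatives
of the minima of `j - i` over the supports of `f₁', f₂'`, then, with
`f_l` the series with `coeff f_l (i,t) = coeff f_l' (i, t+i-m_l)`, one has
`m₁ + m₂ ≤ m` and `f = u^{m-m₁-m₂} f₁ f₂`; in particular `f` is reducible. -/
theorem stmt_11
    (f f' f1' f2' f1 f2 : MvPowerSeries (Fin 2) ℂ)
    (m : ℕ) (m1 m2 : ℤ)
    (hw : ∀ d : Fin 2 →₀ ℕ, coeff d f ≠ 0 → m ≤ d 0 + d 1)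
    (hwex : ∃ d : Fin 2 →₀ ℕ, coeff d f ≠ 0 ∧ d 0 + d 1 = m)
    (hf' : ∀ d : Fin 2 →₀ ℕ, coeff d f' =
      if (d 0 : ℤ) ≤ (d 1 : ℤ) + (m : ℤ) then
        coeff (Finsupp.single 0 (d 0) + Finsupp.single 1 (d 1 + m - d 0)) f
      else 0)
    (hfac : f' = f1' * f2')
    (h1nu : constantCoeff f1' = 0)
    (h2nu : constantCoeff f2' = 0)
    (hm1 : ∀ d : Fin 2 →₀ ℕ, coeff d f1' ≠ 0 → 0 ≤ (d 1 : ℤ) - (d 0 : ℤ) + m1)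
    (hm1ex : ∃ d : Fin 2 →₀ ℕ, coeff d f1' ≠ 0 ∧ (d 1 : ℤ) - (d 0 : ℤ) + m1 = 0)
    (hm2 : ∀ d : Fin 2 →₀ ℕ, coeff d f2' ≠ 0 → 0 ≤ (d 1 : ℤ) - (d 0 : ℤ) + m2)
    (hm2ex : ∃ d : Fin 2 →₀ ℕ, coeff d f2' ≠ 0 ∧ (d 1 : ℤ) - (d 0 : ℤ) + m2 = 0)
    (hf1 : ∀ d : Fin 2 →₀ ℕ, coeff d f1 =
      if 0 ≤ (d 1 : ℤ) + (d 0 : ℤ) - m1 then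
        coeff (Finsupp.single 0 (d 0) +
          Finsupp.single 1 ((d 1 : ℤ) + (d 0 : ℤ) - m1).toNat) f1'
      else 0)
    (hf2 : ∀ d : Fin 2 →₀ ℕ, coeff d f2 =
      if 0 ≤ (d 1 : ℤ) + (d 0 : ℤ) - m2 then
        coeff (Finsupp.single 0 (d 0) +
          Finsupp.single 1 ((d 1 : ℤ) + (d 0 : ℤ) - m2).toNat) f2'
      else 0) :
    m1 + m2 ≤ (m : ℤ) ∧
    f = (MvPowerSeries.X 1) ^ ((m : ℤ) - m1 - m2).toNat * f1 * f2 ∧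
    ¬ Irreducible f := by
  have hshear : shear f = X 1 ^ m * f' := shear_eq_X_one_pow_mul_of_le_degree hw hf'
  have hf'_ndvd : ¬ X 1 ∣ f' := by
    obtain ⟨d, hd, hdm⟩ := hwex
    refine not_X_dvd_of_coeff_ne_zero (d := Finsupp.single 0 (d 0)) ?_ (by simp)
    rw [hf', if_pos (by simp; omega)]
    convert hd
    exact Finsupp.ext_fin_two (by simp) (by simp; omega)
  have hm1_nonneg : 0 ≤ m1 :=
    nonneg_of_not_X_one_dvd hm1 fun h => hf'_ndvd (hfac ▸ dvd_mul_of_dvd_left h _)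
  have hm2_nonneg : 0 ≤ m2 :=
    nonneg_of_not_X_one_dvd hm2 fun h => hf'_ndvd (hfac ▸ dvd_mul_of_dvd_right h _)
  have hshear1 := shear_eq_X_one_pow_mul_of_sub_le hm1_nonneg hm1 hf1
  have hshear2 := shear_eq_X_one_pow_mul_of_sub_le hm2_nonneg hm2 hf2
  have hshear_prod : shear (f1 * f2) = X 1 ^ (m1.toNat + m2.toNat) * f' := by
    rw [map_mul, hshear1, hshear2, hfac]
    ring
  have hprod_ndvd : ¬ X 1 ∣ f1 * f2 := fun h => ((X_prime 1).dvd_or_dvd h).elim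
    (not_X_one_dvd_of_coeff hm1ex hf1) (not_X_one_dvd_of_coeff hm2ex hf2)
  have hle := le_of_shear_eq_X_one_pow_mul hprod_ndvd hshear_prod hshear
  have hfactor : f = X 1 ^ ((m : ℤ) - m1 - m2).toNat * f1 * f2 := shear_injective (by
    rw [mul_assoc, map_mul, map_pow, shear_X_one, hshear_prod, hshear, ← mul_assoc, ← pow_add]
    congr 2
    omega)
  refine ⟨by omega, hfactor, not_irreducible_of_eq_mul hfactor ?_ ?_⟩
  · rw [map_mul, ← constantCoeff_shear f1, hshear1]
    simp [h1nu]
  · rw [← constantCoeff_shear f2, hshear2]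
    simp [h2nu]
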